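/- arXiv:2001.00534 — 3 statements merged into one kernel-verified Lean document; each statement's English description precedes it below -/
import Mathlib

section
/- If the circle S¹ is the union of two open, path-connected proper subsets U and V, then the intersection U ∩ V is not path connected (it has at least two path components). -/
/-!
Pick `a ∉ U` and `b ∉ V`. Removing `a` leaves an open arc, which is homeomorphic to an open interval
of `ℝ`; inside it, `U` is an open set containing the nonempty compact set `K = Vᶜ ∋ b`, and
`U ∩ V = U \ K`. Just below `min K` and just above `max K` there are points of `U \ K`, while `K`
lies between them, so `U \ K` is not an interval, i.e. not preconnected.
-/

open Set

theorem not_isPreconnected_diff_of_isCompact {α : Type*} [LinearOrder α] [TopologicalSpace α]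
    [OrderTopology α] [DenselyOrdered α] [NoMinOrder α] [NoMaxOrder α] {U K : Set α}
    (hU : IsOpen U) (hK : IsCompact K) (hKne : K.Nonempty) (hKU : K ⊆ U) :
    ¬ IsPreconnected (U \ K) := by
  intro hpc
  obtain ⟨m, hmK, hm⟩ := hK.exists_isLeast hKne
  obtain ⟨M, hMK, hM⟩ := hK.exists_isGreatest hKne
  obtain ⟨l, hlm, hlU⟩ := exists_Ioc_subset_of_mem_nhds (hU.mem_nhds (hKU hmK)) (exists_lt m)
  obtain ⟨r, hMr, hrU⟩ := exists_Ico_subset_of_mem_nhds (hU.mem_nhds (hKU hMK)) (exists_gt M)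
  obtain ⟨u, hlu, hum⟩ := exists_between hlm
  obtain ⟨v, hMv, hvr⟩ := exists_between hMr
  have hu : u ∈ U \ K := ⟨hlU ⟨hlu, hum.le⟩, fun huK => (hm huK).not_gt hum⟩
  have hv : v ∈ U \ K := ⟨hrU ⟨hMv.le, hvr⟩, fun hvK => (hM hvK).not_gt hMv⟩
  have hmem : m ∈ U \ K := hpc.ordConnected.out hu hv ⟨hum.le, (hM hmK).trans hMv.le⟩
  exact hmem.2 hmK

theorem OpenPartialHomeomorph.not_isPreconnected_diff {X α : Type*} [TopologicalSpace X]
    [LinearOrder α] [TopologicalSpace α] [OrderTopology α] [DenselyOrdered α] [NoMinOrder α]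
    [NoMaxOrder α] (e : OpenPartialHomeomorph X α) {U K : Set X} (hU : IsOpen U)
    (hUe : U ⊆ e.source) (hK : IsCompact K) (hKne : K.Nonempty) (hKU : K ⊆ U) :
    ¬ IsPreconnected (U \ K) := by
  intro hpc
  have himage : e '' (U \ K) = e '' U \ e '' K := (e.injOn.mono hUe).image_sdiff_subset hKU
  refine not_isPreconnected_diff_of_isCompact (e.isOpen_image_of_subset_source hU hUe)
    (hK.image_of_continuousOn (e.continuousOn.mono (hKU.trans hUe))) (hKne.image e)
    (image_mono hKU) ?_
  rw [← himage]
  exact hpc.image e (e.continuousOn.mono (sdiff_subset.trans hUe))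

theorem Circle.exists_openPartialHomeomorph_real_source_eq (a : Circle) :
    ∃ e : OpenPartialHomeomorph Circle ℝ, e.source = {a}ᶜ := by
  have : Fact (0 < 2 * Real.pi) := ⟨Real.two_pi_pos⟩
  refine ⟨AddCircle.homeomorphCircle'.symm.toOpenPartialHomeomorph.trans
    (AddCircle.openPartialHomeomorphCoe (2 * Real.pi) (Complex.arg a)).symm, ?_⟩
  ext z
  simp only [OpenPartialHomeomorph.trans_source, Homeomorph.toOpenPartialHomeomorph_source,
    OpenPartialHomeomorph.symm_source, AddCircle.openPartialHomeomorphCoe_target, univ_inter,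
    mem_preimage, mem_compl_singleton_iff, Homeomorph.toOpenPartialHomeomorph_apply]
  rw [Ne, Homeomorph.symm_apply_eq, AddCircle.homeomorphCircle'_apply_mk, Circle.exp_arg]

theorem Circle.not_isPreconnected_inter_of_union_eq_univ {U V : Set Circle} (hUo : IsOpen U)
    (hVo : IsOpen V) (hUne : U ≠ univ) (hVne : V ≠ univ) (hUV : U ∪ V = univ) :
    ¬ IsPreconnected (U ∩ V) := by
  obtain ⟨a, ha⟩ := (ne_univ_iff_exists_notMem U).mp hUne
  obtain ⟨b, hb⟩ := (ne_univ_iff_exists_notMem V).mp hVne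
  obtain ⟨e, he⟩ := exists_openPartialHomeomorph_real_source_eq a
  have hUe : U ⊆ e.source := he ▸ fun z hz (hza : z = a) => ha (hza ▸ hz)
  have hVcU : Vᶜ ⊆ U := compl_subset_iff_union.mpr (union_comm V U ▸ hUV)
  rw [← sdiff_compl]
  exact e.not_isPreconnected_diff hUo hUe hVo.isClosed_compl.isCompact ⟨b, hb⟩ hVcU

theorem circle_cover_inter_not_pathConnected_general (U V : Set Circle)
    (hUo : IsOpen U) (hVo : IsOpen V)
    (hUne : U ≠ Set.univ) (hVne : V ≠ Set.univ)
    (hUV : U ∪ V = Set.univ) :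
    ¬ IsPathConnected (U ∩ V) := fun hpc =>
  Circle.not_isPreconnected_inter_of_union_eq_univ hUo hVo hUne hVne hUV
    hpc.isConnected.isPreconnected

/-- If the circle `S¹` is the union of two open, path-connected proper subsets
`U` and `V`, then the intersection `U ∩ V` is not path connected. -/
theorem circle_cover_inter_not_pathConnected (U V : Set Circle)
    (hUo : IsOpen U) (hVo : IsOpen V)
    (hUpc : IsPathConnected U) (hVpc : IsPathConnected V)
    (hUne : U ≠ Set.univ) (hVne : V ≠ Set.univ)
    (hUV : U ∪ V = Set.univ) :
    ¬ IsPathConnected (U ∩ V) :=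
  circle_cover_inter_not_pathConnected_general U V hUo hVo hUne hVne hUV
end

section
/- Let M be a subgroup of a group P. Then the following are equivalent: (i) for all g, h, k, a, c, b, d ∈ P, if k⁻¹h⁻¹ga ∈ M and b⁻¹a⁻¹cd ∈ M then (kb)⁻¹h⁻¹(gc)d ∈ M; (ii) M is a normal subgroup of P. (That is, squares in P commuting up to an element of M are closed under horizontal composition precisely when M is normal in P.) -/
/-!
The defect `(k b)⁻¹ h⁻¹ (g c) d` of a horizontal composite is the defect of the left square
conjugated by `b`, times the defect of the right square. So normality of `M` gives closure;
conversely, composing a square of defect `n` with a commuting square whose bottom and right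
edges are `x⁻¹` yields a square of defect `x n x⁻¹`.
-/

theorem hcomp_defect_eq {G : Type*} [Group G] (g h k a c b d : G) :
    (k * b)⁻¹ * h⁻¹ * (g * c) * d = b⁻¹ * (k⁻¹ * h⁻¹ * g * a) * b * (b⁻¹ * a⁻¹ * c * d) := by
  group

theorem Subgroup.Normal.hcomp_defect_mem {G : Type*} [Group G] {M : Subgroup G} (hM : M.Normal)
    {g h k a c b d : G} (hleft : k⁻¹ * h⁻¹ * g * a ∈ M) (hright : b⁻¹ * a⁻¹ * c * d ∈ M) :
    (k * b)⁻¹ * h⁻¹ * (g * c) * d ∈ M := by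
  rw [hcomp_defect_eq g h k a c b d]
  exact M.mul_mem (hM.conj_mem' _ hleft b) hright

theorem Subgroup.normal_of_hcomp_defect_mem {G : Type*} [Group G] (M : Subgroup G)
    (H : ∀ g h k a c b d : G, k⁻¹ * h⁻¹ * g * a ∈ M → b⁻¹ * a⁻¹ * c * d ∈ M →
      (k * b)⁻¹ * h⁻¹ * (g * c) * d ∈ M) :
    M.Normal := by
  refine ⟨fun n hn x => ?_⟩
  simpa using H n 1 1 1 1 x⁻¹ x⁻¹ (by simpa using hn) (by simp)

/-- Squares in a group `P` commuting up to an element of a subgroup `M`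
(a square with top `g`, left `h`, right `a`, bottom `k` commutes up to `M` if
`k⁻¹ * h⁻¹ * g * a ∈ M`) are closed under horizontal composition if and only if
`M` is a normal subgroup of `P`. -/
theorem squares_closed_under_horizontal_composition_iff_normal
    {P : Type*} [Group P] (M : Subgroup P) :
    (∀ g h k a c b d : P,
        k⁻¹ * h⁻¹ * g * a ∈ M → b⁻¹ * a⁻¹ * c * d ∈ M →
          (k * b)⁻¹ * h⁻¹ * (g * c) * d ∈ M) ↔ M.Normal :=
  ⟨M.normal_of_hcomp_defect_mem, fun hM _ _ _ _ _ _ _ => hM.hcomp_defect_mem⟩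
end

section
/- Let μ : M → P be a crossed module. Consider a 2×2 grid of squares over the crossed module, where square (i,j) (row i, column j, with i,j ∈ {1,2}) has top edge t_ij, left edge l_ij, right edge r_ij, bottom edge b_ij in P and element m_ij ∈ M with μ(m_ij) = b_ij⁻¹ l_ij⁻¹ t_ij r_ij, and the edges match: r_11 = l_12, r_21 = l_22, b_11 = t_21, b_12 = t_22. Then composing rows first and then columns gives the same element of M as composing columns first and then rows; explicitly, (m_21^{b_22} · m_22) · (m_11^{b_12} · m_12)^{r_22} = (m_21 · m_11^{r_21})^{b_22} · (m_22 · m_12^{r_22}). (This is the interchange law for the horizontal and vertical compositions of squares over a crossed module.) -/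
/-!
Expanding both sides with the action laws, they differ only in whether `m₁₁` stands to the
left or to the right of the image of `m₀₀`, transported to the far corner along two different
paths, `b₀₁ r₁₁` and `r₁₀ b₁₁`. The boundary of square `(1,1)` says these paths differ by
`μ m₁₁`, and CM2 turns acting by `μ m₁₁` into conjugation by `m₁₁`.
-/

/-- A crossed module consists of groups `M` and `P`, a homomorphism `μ : M →* P`, and
a right action `act : M → P → M` of `P` on `M` by group automorphisms (written `m^p`),
satisfying CM1: `μ (m^p) = p⁻¹ * μ m * p` and CM2: `n⁻¹ * m * n = m^(μ n)`. -/
structure IsCrossedModule {M P : Type*} [Group M] [Group P]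
    (μ : M →* P) (act : M → P → M) : Prop where
  act_one : ∀ m : M, act m 1 = m
  act_mul : ∀ (m : M) (p q : P), act m (p * q) = act (act m p) q
  act_map_mul : ∀ (m n : M) (p : P), act (m * n) p = act m p * act n p
  cm1 : ∀ (m : M) (p : P), μ (act m p) = p⁻¹ * μ m * p
  cm2 : ∀ m n : M, n⁻¹ * m * n = act m (μ n)

namespace IsCrossedModule

variable {M P : Type*} [Group M] [Group P] {μ : M →* P} {act : M → P → M}

theorem act_mul_map (hcm : IsCrossedModule μ act) (m n : M) (p : P) :
    act m (p * μ n) = n⁻¹ * act m p * n := by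
  rw [hcm.act_mul, hcm.cm2]

theorem mul_act_mul_map (hcm : IsCrossedModule μ act) (m n : M) (p : P) :
    n * act m (p * μ n) = act m p * n := by
  rw [hcm.act_mul_map]
  group

end IsCrossedModule

theorem interchange_of_squares_general {M P : Type*} [Group M] [Group P]
    (μ : M →* P) (act : M → P → M) (hcm : IsCrossedModule μ act)
    (t l r b : Fin 2 → Fin 2 → P) (m : Fin 2 → Fin 2 → M)
    (hbd : ∀ i j, μ (m i j) = (b i j)⁻¹ * (l i j)⁻¹ * t i j * r i j)
    (h21 : r 1 0 = l 1 1)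
    (h2v : b 0 1 = t 1 1) :
    act (m 1 0) (b 1 1) * m 1 1 * act (act (m 0 0) (b 0 1) * m 0 1) (r 1 1) =
      act (m 1 0 * act (m 0 0) (r 1 0)) (b 1 1) * (m 1 1 * act (m 0 1) (r 1 1)) := by
  have hcorner : b 0 1 * r 1 1 = r 1 0 * b 1 1 * μ (m 1 1) := by
    rw [hbd 1 1, ← h2v, ← h21]
    group
  calc act (m 1 0) (b 1 1) * m 1 1 * act (act (m 0 0) (b 0 1) * m 0 1) (r 1 1)
      = act (m 1 0) (b 1 1) * (m 1 1 * act (m 0 0) (b 0 1 * r 1 1)) *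
          act (m 0 1) (r 1 1) := by
        rw [hcm.act_map_mul, hcm.act_mul]
        group
    _ = act (m 1 0) (b 1 1) * (act (m 0 0) (r 1 0 * b 1 1) * m 1 1) *
          act (m 0 1) (r 1 1) := by
        rw [hcorner, hcm.mul_act_mul_map]
    _ = act (m 1 0 * act (m 0 0) (r 1 0)) (b 1 1) * (m 1 1 * act (m 0 1) (r 1 1)) := by
        rw [hcm.act_map_mul, hcm.act_mul]
        group

/-- The interchange law for horizontal and vertical composition of squares over a
crossed module: for a 2×2 grid of squares over the crossed module, where square
`(i,j)` has top edge `t i j`, left edge `l i j`, right edge `r i j`, bottom edge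
`b i j` and element `m i j` with `μ (m i j) = (b i j)⁻¹ * (l i j)⁻¹ * t i j * r i j`,
and with matching edges, composing rows first and then columns gives the same
element of `M` as composing columns first and then rows. -/
theorem interchange_of_squares {M P : Type*} [Group M] [Group P]
    (μ : M →* P) (act : M → P → M) (hcm : IsCrossedModule μ act)
    (t l r b : Fin 2 → Fin 2 → P) (m : Fin 2 → Fin 2 → M)
    (hbd : ∀ i j, μ (m i j) = (b i j)⁻¹ * (l i j)⁻¹ * t i j * r i j)
    (h11 : r 0 0 = l 0 1) (h21 : r 1 0 = l 1 1)
    (h1v : b 0 0 = t 1 0) (h2v : b 0 1 = t 1 1) :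
    act (m 1 0) (b 1 1) * m 1 1 * act (act (m 0 0) (b 0 1) * m 0 1) (r 1 1) =
      act (m 1 0 * act (m 0 0) (r 1 0)) (b 1 1) * (m 1 1 * act (m 0 1) (r 1 1)) :=
  interchange_of_squares_general μ act hcm t l r b m hbd h21 h2v
end
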